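/- Let H = ℍ_n ⊕ ℍ_n (orthogonal direct sum of two copies of the hyperbolic group of rank n) and let φ: H → H be the swap map (a,b) ↦ (b,a). Then φ lies in the subgroup of Sp(H) generated by transvections. -/

import Mathlib

/-- omega_n = e^{2 pi i/n} as a unit of the complex numbers. -/
noncomputable def omegaU (n : ℕ) : ℂˣ :=
  Units.mk0 (Complex.exp (2 * Real.pi * Complex.I / n)) (Complex.exp_ne_zero _)

/-- Z-bilinearity of a pairing into the unit group of the complex numbers. -/
def IsBilinPairing {H : Type*} [AddCommGroup H] (f : H → H → ℂˣ) : Prop :=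
  (∀ a b c : H, f (a + b) c = f a c * f b c) ∧ (∀ a b c : H, f a (b + c) = f a b * f a c)

/-- Antisymmetry: <a,b> = <b,a>⁻¹. -/
def IsAntisymmPairing {H : Type*} [AddCommGroup H] (f : H → H → ℂˣ) : Prop :=
  ∀ a b : H, f a b = (f b a)⁻¹

/-- Nonsingularity of a pairing: <a,b> = 1 for all b implies a = 0. -/
def IsNonsingularPairing {H : Type*} [AddCommGroup H] (f : H → H → ℂˣ) : Prop :=
  ∀ a : H, (∀ b : H, f a b = 1) → a = 0

/-- The standard pairing on the hyperbolic group H_n = Z/n × Z/n: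
<(i,j),(k,l)> = omega_n^{il - jk}. -/
noncomputable def hypPair (n : ℕ) (a b : ZMod n × ZMod n) : ℂˣ :=
  omegaU n ^ (a.1 * b.2 - a.2 * b.1).val

/-- The (multiplicative) group structure on additive automorphisms, as in the older Mathlib. -/
instance AddAut.group {A : Type*} [Add A] : Group (AddAut A) where
  mul g h := AddEquiv.trans h g
  one := AddEquiv.refl _
  inv := AddEquiv.symm
  mul_assoc _ _ _ := rfl
  one_mul _ := rfl
  mul_one _ := rfl
  inv_mul_cancel := AddEquiv.self_trans_symm

/-- The isometry group Sp(H) of a pairing, as a subgroup of the automorphism group. -/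
def SpGroup {H : Type*} [AddCommGroup H] (f : H → H → ℂˣ) : Subgroup (AddAut H) where
  carrier := {e | ∀ a b : H, f (e a) (e b) = f a b}
  one_mem' := fun _ _ => rfl
  mul_mem' := by
    intro e g he hg a b
    have h1 : ∀ x, (e * g) x = e (g x) := fun x => rfl
    rw [h1, h1, he, hg]
  inv_mem' := by
    intro e he a b
    have := he (e⁻¹ a) (e⁻¹ b)
    have h2 : ∀ x, e (e⁻¹ x) = x := fun x => e.apply_symm_apply x
    rw [h2, h2] at this
    exact this.symm

/-- e is a transvection s_{b,k} for the pairing f: for some nonzero b and k ∈ ℤ,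
e sends a to a - k·j(a)·b where <b,a> = ω_m^{j(a)} and m is the order of b. -/
def IsTransvection {H : Type*} [AddCommGroup H] (f : H → H → ℂˣ) (e : AddAut H) : Prop :=
  ∃ b : H, b ≠ 0 ∧ ∃ k : ℤ, ∀ a : H, ∃ j : ℤ,
    f b a = omegaU (addOrderOf b) ^ j ∧ e a = a - (k * j) • b

/-- e is a transvection s_b (with k = 1) for the pairing f. -/
def IsTransvection1 {H : Type*} [AddCommGroup H] (f : H → H → ℂˣ) (e : AddAut H) : Prop :=
  ∃ b : H, b ≠ 0 ∧ ∀ a : H, ∃ j : ℤ,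
    f b a = omegaU (addOrderOf b) ^ j ∧ e a = a - j • b

/-- The product pairing on H_n ⊕ H_n. -/
noncomputable def prodPair (n : ℕ)
    (a b : (ZMod n × ZMod n) × (ZMod n × ZMod n)) : ℂˣ :=
  hypPair n a.1 b.1 * hypPair n a.2 b.2

/-!
Write `⟨b, a⟩ = ω_n ^ B(b, a)` with `B` the `ZMod n`-valued symplectic form, `il - jk` on each
summand. Every `b` with a coordinate `1` has order `n`, so `s_{b,-1}` is the linear transvection
`a ↦ a + B(b, a) • b`. With `e = (1, 0)` and `f = (0, 1)`, a direct computation shows that the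
swap is the product of the transvections along `(e + f, -e - f)`, `(e, -e)` and `(f, -f)`.
-/

theorem omegaU_zero : omegaU 0 = 1 := by
  ext
  simp [omegaU]

theorem omegaU_pow_self (n : ℕ) : omegaU n ^ n = 1 := by
  rcases eq_or_ne n 0 with rfl | hn
  · exact pow_zero _
  · ext
    exact (Complex.isPrimitiveRoot_exp n hn).pow_eq_one

theorem omegaU_zpow_eq_of_intCast_eq {n : ℕ} {i j : ℤ} (h : (i : ZMod n) = j) :
    omegaU n ^ i = omegaU n ^ j := by
  obtain ⟨k, hk⟩ := (ZMod.intCast_eq_intCast_iff_dvd_sub i j n).mp h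
  rw [show j = i + n * k by omega, zpow_add, zpow_mul, zpow_natCast, omegaU_pow_self,
    one_zpow, mul_one]

/-- For `n = 0`, `x.val` is `|x|` rather than `x`; the two sides agree only because the junk
value `omegaU 0` is `1`. -/
theorem omegaU_pow_val {n : ℕ} (x : ZMod n) :
    omegaU n ^ x.val = omegaU n ^ (x.cast : ℤ) := by
  cases n with
  | zero => simp [omegaU_zero]
  | succ n =>
    rw [← zpow_natCast]
    exact omegaU_zpow_eq_of_intCast_eq (by simp [ZMod.intCast_cast])

theorem addOrderOf_eq_of_map_eq_one {n : ℕ} {H : Type*} [AddCommGroup H] [Module (ZMod n) H]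
    (φ : H →+ ZMod n) {b : H} (hb : φ b = 1) : addOrderOf b = n := by
  refine Nat.dvd_antisymm ?_ ?_
  · rw [addOrderOf_dvd_iff_nsmul_eq_zero, ← Nat.cast_smul_eq_nsmul (ZMod n), ZMod.natCast_self,
      zero_smul]
  · simpa [hb, ZMod.addOrderOf_one] using addOrderOf_map_dvd φ b

section Transvection

variable {n : ℕ} {H : Type*} [AddCommGroup H] [Module (ZMod n) H] {f : H → H → ℂˣ}
  {φ : Module.Dual (ZMod n) H} {b : H}

theorem isTransvection_transvection (hb : b ≠ 0) (hbn : addOrderOf b = n)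
    (hf : ∀ a, f b a = omegaU n ^ ((φ a).cast : ℤ)) (hφ : φ b = 0) :
    IsTransvection f (LinearEquiv.transvection hφ).toAddEquiv := by
  refine ⟨b, hb, -1, fun a => ⟨(φ a).cast, by rw [hbn, hf], ?_⟩⟩
  change a + φ a • b = a - (-1 * ((φ a).cast : ℤ)) • b
  rw [neg_one_mul, neg_smul, sub_neg_eq_add, ← Int.cast_smul_eq_zsmul (ZMod n),
    ZMod.intCast_cast, ZMod.cast_id]

theorem transvection_mem_closure_isTransvection (hbn : addOrderOf b = n)
    (hf : ∀ a, f b a = omegaU n ^ ((φ a).cast : ℤ)) (hφ : φ b = 0) :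
    (LinearEquiv.transvection hφ).toAddEquiv ∈ Subgroup.closure {e | IsTransvection f e} := by
  rcases eq_or_ne b 0 with rfl | hb
  · rw [LinearEquiv.transvection.of_right_eq_zero]
    exact one_mem _
  · exact Subgroup.subset_closure (isTransvection_transvection hb hbn hf hφ)

end Transvection

abbrev Hyp (n : ℕ) := ZMod n × ZMod n

def hypForm (n : ℕ) : LinearMap.BilinForm (ZMod n) (Hyp n) :=
  LinearMap.mk₂ (ZMod n) (fun x y => x.1 * y.2 - x.2 * y.1)
    (fun _ _ _ => by simp only [Prod.fst_add, Prod.snd_add]; ring)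
    (fun _ _ _ => by simp only [Prod.smul_fst, Prod.smul_snd, smul_eq_mul]; ring)
    (fun _ _ _ => by simp only [Prod.fst_add, Prod.snd_add]; ring)
    (fun _ _ _ => by simp only [Prod.smul_fst, Prod.smul_snd, smul_eq_mul]; ring)

def prodForm (n : ℕ) : LinearMap.BilinForm (ZMod n) (Hyp n × Hyp n) :=
  (hypForm n).compl₁₂ (LinearMap.fst _ _ _) (LinearMap.fst _ _ _) +
    (hypForm n).compl₁₂ (LinearMap.snd _ _ _) (LinearMap.snd _ _ _)

theorem prodForm_apply (n : ℕ) (b a : Hyp n × Hyp n) :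
    prodForm n b a =
      (b.1.1 * a.1.2 - b.1.2 * a.1.1) + (b.2.1 * a.2.2 - b.2.2 * a.2.1) :=
  rfl

theorem prodForm_self (n : ℕ) (b : Hyp n × Hyp n) : prodForm n b b = 0 := by
  rw [prodForm_apply]
  ring

theorem prodPair_eq_omegaU_zpow (n : ℕ) (b a : Hyp n × Hyp n) :
    prodPair n b a = omegaU n ^ ((prodForm n b a).cast : ℤ) := by
  rw [prodPair, hypPair, hypPair, omegaU_pow_val, omegaU_pow_val, ← zpow_add]
  exact omegaU_zpow_eq_of_intCast_eq (by simp [ZMod.intCast_cast, prodForm_apply])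

def symplTransvection (n : ℕ) (b : Hyp n × Hyp n) : AddAut (Hyp n × Hyp n) :=
  (LinearEquiv.transvection (prodForm_self n b)).toAddEquiv

theorem symplTransvection_apply (n : ℕ) (b a : Hyp n × Hyp n) :
    symplTransvection n b a = a + prodForm n b a • b :=
  rfl

theorem symplTransvection_mem_closure {n : ℕ} {b : Hyp n × Hyp n}
    (hb : b.1.1 = 1 ∨ b.1.2 = 1) :
    symplTransvection n b ∈ Subgroup.closure {e | IsTransvection (prodPair n) e} := by
  refine transvection_mem_closure_isTransvection ?_ (prodPair_eq_omegaU_zpow n b) _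
  rcases hb with hb | hb
  · exact addOrderOf_eq_of_map_eq_one
      ((AddMonoidHom.fst (ZMod n) (ZMod n)).comp (AddMonoidHom.fst (Hyp n) (Hyp n))) hb
  · exact addOrderOf_eq_of_map_eq_one
      ((AddMonoidHom.snd (ZMod n) (ZMod n)).comp (AddMonoidHom.fst (Hyp n) (Hyp n))) hb

theorem prodComm_eq_symplTransvection_mul (n : ℕ) :
    (AddEquiv.prodComm : AddAut (Hyp n × Hyp n)) =
      symplTransvection n ((1, 1), (-1, -1)) * symplTransvection n ((1, 0), (-1, 0)) *
        symplTransvection n ((0, 1), (0, -1)) := by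
  refine DFunLike.ext _ _ fun ⟨⟨a₁, a₂⟩, ⟨a₃, a₄⟩⟩ => ?_
  change ((a₃, a₄), (a₁, a₂)) = symplTransvection n _ (symplTransvection n _
    (symplTransvection n _ ((a₁, a₂), (a₃, a₄))))
  simp only [symplTransvection_apply, prodForm_apply, Prod.smul_mk, smul_eq_mul,
    Prod.mk_add_mk, Prod.mk.injEq]
  refine ⟨⟨?_, ?_⟩, ?_, ?_⟩ <;> ring

theorem stmt12_general (n : ℕ) :
    (AddEquiv.prodComm :
        ((ZMod n × ZMod n) × (ZMod n × ZMod n)) ≃+ ((ZMod n × ZMod n) × (ZMod n × ZMod n)))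
      ∈ Subgroup.closure
        {e : AddAut ((ZMod n × ZMod n) × (ZMod n × ZMod n)) |
          IsTransvection (prodPair n) e} := by
  rw [prodComm_eq_symplTransvection_mul]
  exact mul_mem (mul_mem (symplTransvection_mem_closure (Or.inl rfl))
    (symplTransvection_mem_closure (Or.inl rfl))) (symplTransvection_mem_closure (Or.inr rfl))

/-- The swap map (a,b) ↦ (b,a) on H_n ⊕ H_n lies in the subgroup Q(H) generated by the
transvections. -/
theorem stmt12 (n : ℕ) (hn : 0 < n) :
    (AddEquiv.prodComm :
        ((ZMod n × ZMod n) × (ZMod n × ZMod n)) ≃+ ((ZMod n × ZMod n) × (ZMod n × ZMod n)))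
      ∈ Subgroup.closure
        {e : AddAut ((ZMod n × ZMod n) × (ZMod n × ZMod n)) |
          IsTransvection (prodPair n) e} :=
  stmt12_general n
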